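/- arXiv:1309.1807 — 3 statements merged into one kernel-verified Lean document; each statement's English description precedes it below -/
import Mathlib

section
/- Let Q be a finite nonempty set of points in ℝ², and let q₁ be a point of Q maximizing x+y over Q, q₂ a point of Q maximizing y−x over Q, q₃ a point of Q minimizing x+y over Q, and q₄ a point of Q maximizing x−y over Q. Then for every point p ∈ ℝ², the maximum L1 distance from p to Q is attained within these four extreme points: max_{q∈Q} d₁(p,q) = max{d₁(p,q₁), d₁(p,q₂), d₁(p,q₃), d₁(p,q₄)}. -/
/-- The L1 distance between two points of the plane. -/
def d1 (p q : ℝ × ℝ) : ℝ := |p.1 - q.1| + |p.2 - q.2|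

theorem stmt_0 (Q : Finset (ℝ × ℝ)) (hQ : Q.Nonempty)
    (q1 q2 q3 q4 : ℝ × ℝ)
    (hq1 : q1 ∈ Q) (hq2 : q2 ∈ Q) (hq3 : q3 ∈ Q) (hq4 : q4 ∈ Q)
    (h1 : ∀ q ∈ Q, q.1 + q.2 ≤ q1.1 + q1.2)
    (h2 : ∀ q ∈ Q, q.2 - q.1 ≤ q2.2 - q2.1)
    (h3 : ∀ q ∈ Q, q3.1 + q3.2 ≤ q.1 + q.2)
    (h4 : ∀ q ∈ Q, q.1 - q.2 ≤ q4.1 - q4.2)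
    (p : ℝ × ℝ) :
    Q.sup' hQ (fun q => d1 p q) =
      max (max (d1 p q1) (d1 p q2)) (max (d1 p q3) (d1 p q4)) := by
  apply le_antisymm
  · apply Finset.sup'_le
    intro q hq
    have a1 := h1 q hq
    have a2 := h2 q hq
    have a3 := h3 q hq
    have a4 := h4 q hq
    have b1 : (q1.1 - p.1) + (q1.2 - p.2) ≤ d1 p q1 := by
      have := le_abs_self (q1.1 - p.1); have := le_abs_self (q1.2 - p.2)
      rw [d1, abs_sub_comm p.1, abs_sub_comm p.2]; linarith
    have b2 : (p.1 - q2.1) + (q2.2 - p.2) ≤ d1 p q2 := by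
      have := le_abs_self (p.1 - q2.1); have := le_abs_self (q2.2 - p.2)
      rw [d1, abs_sub_comm p.2]; linarith
    have b3 : (p.1 - q3.1) + (p.2 - q3.2) ≤ d1 p q3 := by
      have := le_abs_self (p.1 - q3.1); have := le_abs_self (p.2 - q3.2)
      rw [d1]; linarith
    have b4 : (q4.1 - p.1) + (p.2 - q4.2) ≤ d1 p q4 := by
      have := le_abs_self (q4.1 - p.1); have := le_abs_self (p.2 - q4.2)
      rw [d1, abs_sub_comm p.1]; linarith
    rcases le_or_gt p.1 q.1 with hx | hx <;> rcases le_or_gt p.2 q.2 with hy | hy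
    · have : d1 p q = (q.1 - p.1) + (q.2 - p.2) := by
        rw [d1, abs_of_nonpos (by linarith), abs_of_nonpos (by linarith)]; ring
      calc d1 p q ≤ d1 p q1 := by linarith
        _ ≤ _ := le_max_of_le_left (le_max_left _ _)
    · have : d1 p q = (q.1 - p.1) + (p.2 - q.2) := by
        rw [d1, abs_of_nonpos (by linarith), abs_of_pos (by linarith)]; ring
      calc d1 p q ≤ d1 p q4 := by linarith
        _ ≤ _ := le_max_of_le_right (le_max_right _ _)
    · have : d1 p q = (p.1 - q.1) + (q.2 - p.2) := by
        rw [d1, abs_of_pos (by linarith), abs_of_nonpos (by linarith)]; ring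
      calc d1 p q ≤ d1 p q2 := by linarith
        _ ≤ _ := le_max_of_le_left (le_max_right _ _)
    · have : d1 p q = (p.1 - q.1) + (p.2 - q.2) := by
        rw [d1, abs_of_pos (by linarith), abs_of_pos (by linarith)]
      calc d1 p q ≤ d1 p q3 := by linarith
        _ ≤ _ := le_max_of_le_right (le_max_left _ _)
  · simp only [max_le_iff]
    exact ⟨⟨Finset.le_sup' _ hq1, Finset.le_sup' _ hq2⟩,
           Finset.le_sup' _ hq3, Finset.le_sup' _ hq4⟩
end

section
/- Let Q be a finite nonempty set of points in ℝ², and let q₁ be a point of Q maximizing x+y over Q, q₂ a point of Q maximizing y−x over Q, q₃ a point of Q minimizing x+y over Q, and q₄ a point of Q maximizing x−y over Q. Let P be a finite nonempty set of points in ℝ², and suppose σ : P → {1,2,3,4} assigns to each p ∈ P an index such that d₁(p, q_{σ(p)}) = max_{1≤j≤4} d₁(p, q_j); let P_i = {p ∈ P : σ(p) = i} for each i. Then min_{p∈P} max_{q∈Q} d₁(p,q) = min{ d₁(p, q_i) : i ∈ {1,2,3,4}, p ∈ P_i }. In particular, if p* ∈ P_j attains this latter minimum, then p* minimizes max_{q∈Q}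 d₁(p,q) over P. -/
theorem stmt_1 (Q : Finset (ℝ × ℝ)) (hQ : Q.Nonempty)
    (P : Finset (ℝ × ℝ)) (hP : P.Nonempty)
    (qv : Fin 4 → ℝ × ℝ) (hqv : ∀ i, qv i ∈ Q)
    (h1 : ∀ q ∈ Q, q.1 + q.2 ≤ (qv 0).1 + (qv 0).2)
    (h2 : ∀ q ∈ Q, q.2 - q.1 ≤ (qv 1).2 - (qv 1).1)
    (h3 : ∀ q ∈ Q, (qv 2).1 + (qv 2).2 ≤ q.1 + q.2)
    (h4 : ∀ q ∈ Q, q.1 - q.2 ≤ (qv 3).1 - (qv 3).2)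
    (σ : ℝ × ℝ → Fin 4)
    (hσ : ∀ p ∈ P, ∀ j : Fin 4, d1 p (qv j) ≤ d1 p (qv (σ p))) :
    P.inf' hP (fun p => Q.sup' hQ (fun q => d1 p q)) =
      P.inf' hP (fun p => d1 p (qv (σ p))) ∧
    ∀ pstar ∈ P, (∀ p ∈ P, d1 pstar (qv (σ pstar)) ≤ d1 p (qv (σ p))) →
      ∀ p ∈ P, Q.sup' hQ (fun q => d1 pstar q) ≤ Q.sup' hQ (fun q => d1 p q) := by
  have key : ∀ p : ℝ × ℝ, ∀ q ∈ Q, ∃ j : Fin 4, d1 p q ≤ d1 p (qv j) := by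
    intro p q hq
    rcases abs_cases (p.1 - q.1) with ⟨e1, _⟩ | ⟨e1, _⟩ <;>
      rcases abs_cases (p.2 - q.2) with ⟨e2, _⟩ | ⟨e2, _⟩
    · refine ⟨2, ?_⟩
      simp only [d1]; rw [e1, e2]
      linarith [le_abs_self (p.1 - (qv 2).1), le_abs_self (p.2 - (qv 2).2), h3 q hq]
    · refine ⟨1, ?_⟩
      simp only [d1]; rw [e1, e2]
      linarith [le_abs_self (p.1 - (qv 1).1), neg_abs_le (p.2 - (qv 1).2), h2 q hq]
    · refine ⟨3, ?_⟩
      simp only [d1]; rw [e1, e2]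
      linarith [neg_abs_le (p.1 - (qv 3).1), le_abs_self (p.2 - (qv 3).2), h4 q hq]
    · refine ⟨0, ?_⟩
      simp only [d1]; rw [e1, e2]
      linarith [neg_abs_le (p.1 - (qv 0).1), neg_abs_le (p.2 - (qv 0).2), h1 q hq]
  have hsup : ∀ p ∈ P, Q.sup' hQ (fun q => d1 p q) = d1 p (qv (σ p)) := by
    intro p hp
    apply le_antisymm
    · apply Finset.sup'_le
      intro q hq
      obtain ⟨j, hj⟩ := key p q hq
      exact hj.trans (hσ p hp j)
    · exact Finset.le_sup' _ (hqv (σ p))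
  constructor
  · apply Finset.inf'_congr hP rfl
    intro p hp
    exact hsup p hp
  · intro pstar hps hmin p hp
    rw [hsup pstar hps, hsup p hp]
    exact hmin p hp
end

section
/- Let Q be a finite nonempty set of points in the Euclidean plane ℝ² and q ∈ Q. If a point p lies in the farthest-point Voronoi cell C(q) = {p ∈ ℝ² : dist(p,q′) ≤ dist(p,q) for all q′ ∈ Q}, then the entire ray from p in the direction away from q stays in the cell: for every t ≥ 0, the point p + t·(p − q) also lies in C(q). In particular, every nonempty cell C(q) with p ≠ q is unbounded. -/
variable {E : Type*} [NormedAddCommGroup E] [NormedSpace ℝ E]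

def farthestVoronoiCell (Q : Set E) (q : E) : Set E :=
  {x | ∀ q' ∈ Q, dist x q' ≤ dist x q}

/-- Moving from `p` away from `q` adds the same amount `t ‖p - q‖` to the distance to `q` and at
most that amount to the distance to any other site. -/
theorem add_smul_sub_mem_farthestVoronoiCell {Q : Set E} {q p : E}
    (hp : p ∈ farthestVoronoiCell Q q) {t : ℝ} (ht : 0 ≤ t) :
    p + t • (p - q) ∈ farthestVoronoiCell Q q := by
  intro q' hq'
  calc dist (p + t • (p - q)) q'
      ≤ dist (p + t • (p - q)) p + dist p q' := dist_triangle _ _ _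
    _ ≤ t * ‖p - q‖ + ‖p - q‖ := by
        gcongr
        · simp [dist_eq_norm, norm_smul, abs_of_nonneg ht]
        · simpa [dist_eq_norm] using hp q' hq'
    _ = dist (p + t • (p - q)) q := by
        rw [dist_eq_norm, show p + t • (p - q) - q = (1 + t) • (p - q) by module, norm_smul,
          Real.norm_of_nonneg (by linarith)]
        ring

theorem not_isBounded_of_forall_add_smul_mem {s : Set E} {p v : E} (hv : v ≠ 0)
    (hs : ∀ t : ℝ, 0 ≤ t → p + t • v ∈ s) : ¬Bornology.IsBounded s := by
  intro hb
  obtain ⟨C, hC⟩ := Metric.isBounded_iff.1 hb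
  have hv' : 0 < ‖v‖ := norm_pos_iff.2 hv
  have hC0 : 0 ≤ C := by simpa using hC (hs 0 le_rfl) (hs 0 le_rfl)
  set t := (C + 1) / ‖v‖
  have ht : 0 ≤ t := by positivity
  have hdist : dist (p + t • v) p = C + 1 := by
    rw [dist_eq_norm, add_sub_cancel_left, norm_smul, Real.norm_of_nonneg ht,
      div_mul_cancel₀ _ hv'.ne']
  have := hC (hs t ht) (by simpa using hs 0 le_rfl)
  linarith

theorem stmt_13_general (Q : Finset (EuclideanSpace ℝ (Fin 2)))
    (q : EuclideanSpace ℝ (Fin 2))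
    (p : EuclideanSpace ℝ (Fin 2))
    (hp : p ∈ {x : EuclideanSpace ℝ (Fin 2) | ∀ q' ∈ Q, dist x q' ≤ dist x q}) :
    (∀ t : ℝ, 0 ≤ t →
      p + t • (p - q) ∈
        {x : EuclideanSpace ℝ (Fin 2) | ∀ q' ∈ Q, dist x q' ≤ dist x q}) ∧
    (p ≠ q →
      ¬ Bornology.IsBounded
        {x : EuclideanSpace ℝ (Fin 2) | ∀ q' ∈ Q, dist x q' ≤ dist x q}) := by
  have ray : ∀ t : ℝ, 0 ≤ t → p + t • (p - q) ∈ farthestVoronoiCell (Q : Set _) q :=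
    fun _ ht ↦ add_smul_sub_mem_farthestVoronoiCell hp ht
  exact ⟨ray, fun hpq ↦ not_isBounded_of_forall_add_smul_mem (sub_ne_zero.2 hpq) ray⟩

theorem stmt_13 (Q : Finset (EuclideanSpace ℝ (Fin 2))) (hQ : Q.Nonempty)
    (q : EuclideanSpace ℝ (Fin 2)) (hq : q ∈ Q)
    (p : EuclideanSpace ℝ (Fin 2))
    (hp : p ∈ {x : EuclideanSpace ℝ (Fin 2) | ∀ q' ∈ Q, dist x q' ≤ dist x q}) :
    (∀ t : ℝ, 0 ≤ t →
      p + t • (p - q) ∈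
        {x : EuclideanSpace ℝ (Fin 2) | ∀ q' ∈ Q, dist x q' ≤ dist x q}) ∧
    (p ≠ q →
      ¬ Bornology.IsBounded
        {x : EuclideanSpace ℝ (Fin 2) | ∀ q' ∈ Q, dist x q' ≤ dist x q}) :=
  stmt_13_general Q q p hp
end
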